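/- Let X be a separable Banach space over ℝ or ℂ and let E = X* be its dual Banach space. If E has the uniform weak* Kadec–Klee property (UKK*), then on the unit sphere S = {φ ∈ E : ‖φ‖ = 1} the subspace topology induced by the norm topology of E coincides with the subspace topology induced by the weak* topology of E (the topology of pointwise convergence on X). -/

import Mathlib

open Metric

open Filter Topology NormedSpace in
/-- Key step: under UKK*, for a norm-one functional `φ` and `ε > 0`, the point
`toWeakDual φ` is not in the weak* closure of the norm-one functionals at distance
at least `ε` from `φ`.  We package the conclusion as a weak*-open neighborhood. -/
lemma ukk_key_nbhd
    (𝕜 : Type*) [RCLike 𝕜]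
    (X : Type*) [NormedAddCommGroup X] [NormedSpace 𝕜 X] [CompleteSpace X]
    [TopologicalSpace.SeparableSpace X]
    (hUKK : ∀ ε : ℝ, 0 < ε → ∃ δ : ℝ, 0 < δ ∧ δ < 1 ∧
      ∀ C : Set (StrongDual 𝕜 X), C ⊆ closedBall 0 1 →
        ∀ x : ℕ → StrongDual 𝕜 X, (∀ n, x n ∈ C) →
          ε < sInf {d : ℝ | ∃ n m : ℕ, n ≠ m ∧ d = ‖x n - x m‖} →
          ∃ y : StrongDual 𝕜 X,
            StrongDual.toWeakDual y ∈
              closure (StrongDual.toWeakDual '' C) ∧ ‖y‖ < δ)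
    (φ : StrongDual 𝕜 X) (hφ : ‖φ‖ = 1) {ε : ℝ} (hε : 0 < ε) :
    ∃ V : Set (WeakDual 𝕜 X), IsOpen V ∧ StrongDual.toWeakDual φ ∈ V ∧
      ∀ ψ : StrongDual 𝕜 X, ‖ψ‖ = 1 → StrongDual.toWeakDual ψ ∈ V → ‖ψ - φ‖ < ε := by
  classical
  set A : Set (StrongDual 𝕜 X) := {ψ | ‖ψ‖ = 1 ∧ ε ≤ ‖ψ - φ‖} with hA
  refine ⟨(closure (StrongDual.toWeakDual '' A))ᶜ, isClosed_closure.isOpen_compl, ?_, ?_⟩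
  · -- the main point: `toWeakDual φ ∉ closure (toWeakDual '' A)`
    intro hmem
    have : Nonempty X := ⟨0⟩
    set v : ℕ → X := TopologicalSpace.denseSeq X with hvdef
    have hv : DenseRange v := TopologicalSpace.denseRange_denseSeq X
    -- choose a sequence in A converging pointwise (on the dense set) to φ
    have hpick : ∀ n : ℕ, ∃ ψ : StrongDual 𝕜 X, ψ ∈ A ∧
        ∀ j ≤ n, ‖ψ (v j) - φ (v j)‖ < 1 / (n + 1) := by
      intro n
      set U : Set (WeakDual 𝕜 X) :=
        ⋂ j ∈ Finset.range (n + 1), {w : WeakDual 𝕜 X | ‖w (v j) - φ (v j)‖ < 1 / (n + 1)}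
        with hU
      have hUopen : IsOpen U := by
        refine isOpen_biInter_finset fun j _ => ?_
        exact isOpen_lt (((WeakDual.eval_continuous (v j)).sub continuous_const).norm)
          continuous_const
      have hφU : StrongDual.toWeakDual φ ∈ U := by
        simp only [hU, Set.mem_iInter, Set.mem_setOf_eq]
        intro j _
        have : (StrongDual.toWeakDual φ) (v j) = φ (v j) := rfl
        rw [this, sub_self, norm_zero]
        positivity
      obtain ⟨w, hwU, hwA⟩ := mem_closure_iff.mp hmem U hUopen hφU
      obtain ⟨ψ, hψA, rfl⟩ := hwA
      refine ⟨ψ, hψA, fun j hj => ?_⟩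
      have := Set.mem_iInter.mp hwU j
      simpa using Set.mem_iInter.mp (Set.mem_iInter.mp hwU j) (Finset.mem_range.mpr
        (Nat.lt_succ_of_le hj))
    choose ψ hψA hψclose using hpick
    have hψnorm : ∀ n, ‖ψ n‖ = 1 := fun n => (hψA n).1
    have hψfar : ∀ n, ε ≤ ‖ψ n - φ‖ := fun n => (hψA n).2
    have hsub2 : ∀ n, ‖ψ n - φ‖ ≤ 2 := by
      intro n
      calc ‖ψ n - φ‖ ≤ ‖ψ n‖ + ‖φ‖ := norm_sub_le _ _
      _ = 2 := by rw [hψnorm n, hφ]; norm_num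
    -- pointwise convergence on all of X
    have hpt : ∀ x : X, Tendsto (fun n => ψ n x) atTop (𝓝 (φ x)) := by
      intro x
      rw [Metric.tendsto_atTop]
      intro η hη
      obtain ⟨j, hj⟩ := hv.exists_dist_lt x (by positivity : (0:ℝ) < η / 4)
      obtain ⟨N, hN⟩ := exists_nat_one_div_lt (by positivity : (0:ℝ) < η / 4)
      refine ⟨max j N, fun n hn => ?_⟩
      have hjn : j ≤ n := le_trans (le_max_left _ _) hn
      have hNn : N ≤ n := le_trans (le_max_right _ _) hn
      have h1 : ‖(ψ n - φ) (x - v j)‖ ≤ 2 * (η / 4) := by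
        calc ‖(ψ n - φ) (x - v j)‖ ≤ ‖ψ n - φ‖ * ‖x - v j‖ :=
              ContinuousLinearMap.le_opNorm _ _
        _ ≤ 2 * (η / 4) := by
            apply mul_le_mul (hsub2 n) ?_ (norm_nonneg _) (by norm_num)
            rw [← dist_eq_norm]
            exact le_of_lt hj
      have h2 : ‖(ψ n - φ) (v j)‖ < η / 4 := by
        have hc := hψclose n j hjn
        have : (1 : ℝ) / (n + 1) ≤ 1 / (N + 1) := by
          apply one_div_le_one_div_of_le (by positivity)
          exact_mod_cast Nat.succ_le_succ hNn
        calc ‖(ψ n - φ) (v j)‖ = ‖ψ n (v j) - φ (v j)‖ := by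
              simp [ContinuousLinearMap.sub_apply]
        _ < 1 / (n + 1) := hc
        _ ≤ 1 / (N + 1) := this
        _ < η / 4 := hN
      have hdecomp : ψ n x - φ x = (ψ n - φ) (x - v j) + (ψ n - φ) (v j) := by
        simp only [ContinuousLinearMap.sub_apply, map_sub]
        ring
      rw [dist_eq_norm, hdecomp]
      calc ‖(ψ n - φ) (x - v j) + (ψ n - φ) (v j)‖
          ≤ ‖(ψ n - φ) (x - v j)‖ + ‖(ψ n - φ) (v j)‖ := norm_add_le _ _
      _ < 2 * (η / 4) + η / 4 := by linarith [h1, h2]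
      _ < η := by linarith
    -- weak* convergence
    have hweak : Tendsto (fun n => StrongDual.toWeakDual (ψ n)) atTop (𝓝 (StrongDual.toWeakDual φ)) := by
      rw [tendsto_iff_forall_eval_tendsto_topDualPairing]
      intro y
      exact hpt y
    by_cases htb : TotallyBounded (Set.range ψ)
    · -- totally bounded case: a norm-convergent subsequence, whose limit must be φ
      have hK : IsCompact (closure (Set.range ψ)) :=
        TotallyBounded.isCompact_of_isClosed htb.closure isClosed_closure
      obtain ⟨a, -, g, hg, hga⟩ :=
        hK.tendsto_subseq (fun n => subset_closure (Set.mem_range_self n))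
      have h1 : Tendsto (fun k => StrongDual.toWeakDual (ψ (g k))) atTop
          (𝓝 (StrongDual.toWeakDual a)) :=
        (NormedSpace.Dual.toWeakDual_continuous.tendsto a).comp hga
      have h2 : Tendsto (fun k => StrongDual.toWeakDual (ψ (g k))) atTop
          (𝓝 (StrongDual.toWeakDual φ)) := hweak.comp hg.tendsto_atTop
      have ha : a = φ := by
        have := tendsto_nhds_unique h1 h2
        exact StrongDual.toWeakDual.injective this
      have hεle : ε ≤ ‖a - φ‖ := by
        have hn : Tendsto (fun k => ‖ψ (g k) - φ‖) atTop (𝓝 ‖a - φ‖) :=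
          ((hga.sub tendsto_const_nhds).norm)
        exact ge_of_tendsto' hn (fun k => hψfar (g k))
      rw [ha, sub_self, norm_zero] at hεle
      linarith
    · -- not totally bounded: extract a separated sequence, contradict UKK*
      rw [Metric.totallyBounded_iff] at htb
      push_neg at htb
      obtain ⟨ε', hε', hsep⟩ := htb
      have hex : ∀ s : Finset (StrongDual 𝕜 X), (∀ z ∈ s, z ∈ Set.range ψ) →
          ∃ y, y ∈ Set.range ψ ∧ ∀ z ∈ s, ε' ≤ dist z y := by
        intro s _
        have ht := hsep (↑s : Set (StrongDual 𝕜 X)) s.finite_toSet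
        obtain ⟨y, hy, hy2⟩ := Set.not_subset.mp ht
        refine ⟨y, hy, fun z hz => ?_⟩
        by_contra hlt
        push_neg at hlt
        exact hy2 (Set.mem_biUnion (Finset.mem_coe.mpr hz) (Metric.mem_ball.mpr (by rwa [dist_comm] at hlt)))
      obtain ⟨x, hxmem, hxsep⟩ := exists_seq_of_forall_finset_exists
        (fun z => z ∈ Set.range ψ) (fun a b => ε' ≤ dist a b) hex
      obtain ⟨δ, hδ0, hδ1, hkey⟩ := hUKK (ε' / 2) (half_pos hε')
      have hCball : Set.range ψ ⊆ closedBall 0 1 := by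
        rintro _ ⟨n, rfl⟩
        rw [mem_closedBall_zero_iff, hψnorm n]
      have hsInf : ε' / 2 < sInf {d : ℝ | ∃ n m : ℕ, n ≠ m ∧ d = ‖x n - x m‖} := by
        have hlb : ∀ d ∈ {d : ℝ | ∃ n m : ℕ, n ≠ m ∧ d = ‖x n - x m‖}, ε' ≤ d := by
          rintro d ⟨n, m, hnm, rfl⟩
          rcases hnm.lt_or_gt with h | h
          · have := hxsep n m h
            rwa [dist_eq_norm] at this
          · have := hxsep m n h
            rw [dist_eq_norm] at this
            rwa [norm_sub_rev]
        have hnonempty : {d : ℝ | ∃ n m : ℕ, n ≠ m ∧ d = ‖x n - x m‖}.Nonempty :=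
          ⟨‖x 0 - x 1‖, 0, 1, by norm_num, rfl⟩
        have := le_csInf hnonempty hlb
        linarith
      obtain ⟨y, hyc, hylt⟩ := hkey (Set.range ψ) hCball x hxmem hsInf
      -- the weak* closure of the range of ψ is contained in the range together with φ
      have himg : StrongDual.toWeakDual '' Set.range ψ
          = Set.range (fun n => StrongDual.toWeakDual (ψ n)) := by
        rw [← Set.range_comp]; rfl
      have hKcpt : IsCompact (insert (StrongDual.toWeakDual φ)
          (Set.range fun n => StrongDual.toWeakDual (ψ n))) := hweak.isCompact_insert_range
      have hsubK : closure (StrongDual.toWeakDual '' Set.range ψ) ⊆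
          insert (StrongDual.toWeakDual φ) (Set.range fun n => StrongDual.toWeakDual (ψ n)) := by
        rw [himg]
        exact closure_minimal (Set.subset_insert _ _) hKcpt.isClosed
      have hyK := hsubK hyc
      have hy1 : ‖y‖ = 1 := by
        rcases hyK with h | ⟨n, hn⟩
        · rw [StrongDual.toWeakDual.injective h, hφ]
        · rw [StrongDual.toWeakDual.injective hn.symm, hψnorm n]
      rw [hy1] at hylt
      linarith
  · -- the neighborhood property
    intro ψ hψ hψV
    by_contra hge
    push_neg at hge
    exact hψV (subset_closure ⟨ψ, ⟨hψ, hge⟩, rfl⟩)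

/-- Let X be a separable Banach space over 𝕜 = ℝ or ℂ and let
E = X* be its dual Banach space.  If E has the uniform weak* Kadec–Klee
property (UKK*): for every ε > 0 there is 0 < δ < 1 such that for every subset
C of the closed unit ball of E and every sequence (xₙ) in C with
inf{‖xₙ − xₘ‖ : n ≠ m} > ε there is a point y in the weak* closure of C with
‖y‖ < δ — then on the unit sphere of E the topology induced by the norm
coincides with the topology induced by the weak* topology. -/
theorem ukkStar_implies_norm_eq_weakStar_on_sphere
    (𝕜 : Type*) [RCLike 𝕜]
    (X : Type*) [NormedAddCommGroup X] [NormedSpace 𝕜 X] [CompleteSpace X]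
    [TopologicalSpace.SeparableSpace X]
    (hUKK : ∀ ε : ℝ, 0 < ε → ∃ δ : ℝ, 0 < δ ∧ δ < 1 ∧
      ∀ C : Set (StrongDual 𝕜 X), C ⊆ closedBall 0 1 →
        ∀ x : ℕ → StrongDual 𝕜 X, (∀ n, x n ∈ C) →
          ε < sInf {d : ℝ | ∃ n m : ℕ, n ≠ m ∧ d = ‖x n - x m‖} →
          ∃ y : StrongDual 𝕜 X,
            StrongDual.toWeakDual y ∈
              closure (StrongDual.toWeakDual '' C) ∧ ‖y‖ < δ) :
    TopologicalSpace.induced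
        (fun φ : {φ : StrongDual 𝕜 X // ‖φ‖ = 1} => (φ : StrongDual 𝕜 X))
        inferInstance =
      TopologicalSpace.induced
        (fun φ : {φ : StrongDual 𝕜 X // ‖φ‖ = 1} =>
          StrongDual.toWeakDual (φ : StrongDual 𝕜 X))
        inferInstance := by
  classical
  set i : {φ : StrongDual 𝕜 X // ‖φ‖ = 1} → StrongDual 𝕜 X :=
    fun φ => (φ : StrongDual 𝕜 X) with hi
  refine le_antisymm ?_ ?_
  · -- norm-induced is finer than weak*-induced (trivial direction)
    have h1 : (inferInstance : TopologicalSpace (StrongDual 𝕜 X)) ≤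
        TopologicalSpace.induced StrongDual.toWeakDual
          (inferInstance : TopologicalSpace (WeakDual 𝕜 X)) :=
      continuous_iff_le_induced.mp NormedSpace.Dual.toWeakDual_continuous
    calc TopologicalSpace.induced i (inferInstance : TopologicalSpace (StrongDual 𝕜 X))
        ≤ TopologicalSpace.induced i (TopologicalSpace.induced StrongDual.toWeakDual
            inferInstance) := induced_mono h1
      _ = TopologicalSpace.induced (fun φ : {φ : StrongDual 𝕜 X // ‖φ‖ = 1} =>
            StrongDual.toWeakDual (φ : StrongDual 𝕜 X)) inferInstance :=
          induced_compose
  · -- weak*-induced is finer than norm-induced (uses UKK*)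
    intro s hs
    rw [isOpen_induced_iff] at hs ⊢
    obtain ⟨u, hu, hus⟩ := hs
    -- for every point of s, find a weak*-open neighborhood whose trace is inside s
    have key : ∀ p : {φ : StrongDual 𝕜 X // ‖φ‖ = 1}, p ∈ s →
        ∃ V : Set (WeakDual 𝕜 X), IsOpen V ∧
          StrongDual.toWeakDual (p : StrongDual 𝕜 X) ∈ V ∧
          (fun q : {φ : StrongDual 𝕜 X // ‖φ‖ = 1} =>
            StrongDual.toWeakDual (q : StrongDual 𝕜 X)) ⁻¹' V ⊆ s := by
      intro p hp
      have hpu : (p : StrongDual 𝕜 X) ∈ u := by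
        rw [← hus] at hp; exact hp
      obtain ⟨ε, hε, hball⟩ := Metric.isOpen_iff.mp hu _ hpu
      obtain ⟨V, hVopen, hVmem, hVprop⟩ := ukk_key_nbhd 𝕜 X hUKK
        (p : StrongDual 𝕜 X) p.2 hε
      refine ⟨V, hVopen, hVmem, ?_⟩
      intro q hq
      have : ‖(q : StrongDual 𝕜 X) - (p : StrongDual 𝕜 X)‖ < ε :=
        hVprop _ q.2 hq
      have hqu : (q : StrongDual 𝕜 X) ∈ u := by
        apply hball
        rw [mem_ball, dist_eq_norm]
        exact this
      rw [← hus]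
      exact hqu
    choose V hVopen hVmem hVsub using key
    refine ⟨⋃ (p : {φ : StrongDual 𝕜 X // ‖φ‖ = 1}) (hp : p ∈ s), V p hp, ?_, ?_⟩
    · exact isOpen_iUnion fun p => isOpen_iUnion fun hp => hVopen p hp
    · ext q
      simp only [Set.mem_preimage, Set.mem_iUnion]
      constructor
      · rintro ⟨p, hp, hq⟩
        exact hVsub p hp hq
      · intro hq
        exact ⟨q, hq, hVmem q hq⟩
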